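/- arXiv:1812.11296 — 2 statements merged into one kernel-verified Lean document; each statement's English description precedes it below -/
import Mathlib

section
/- The quartic hypersurface X = {x₁⁴ + x₂⁴ + x₃⁴ + x₀x₁x₂x₃ + x₄(x₀³ + x₄³) = 0} in ℙ⁴ over ℂ is nonsingular, i.e., there is no point of ℙ⁴ at which the defining polynomial and all its partial derivatives simultaneously vanish. -/
/-!
At a singular point `(a, b, c, d, e)`, multiplying the partial derivative in a
coordinate `y ∈ {b, c, d}` by `y` and substituting `abcd = -3a³e` (from `∂f/∂x₀`) and
`a³ = -4e³` (from `∂f/∂x₄`) gives `b⁴ = c⁴ = d⁴ = -3e⁴`. If `e = 0` everything vanishes. Otherwise raising `bcd = -3a²e` to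
the fourth power gives `3a⁸ = -e⁸`, hence `27a²⁴ = -e²⁴`, while `a²⁴ = 4⁸e²⁴`;
together `(27 · 4⁸ + 1) e²⁴ = 0`, a contradiction.
-/

open MvPolynomial

noncomputable def quarticX : MvPolynomial (Fin 5) ℂ :=
  X 1 ^ 4 + X 2 ^ 4 + X 3 ^ 4 + X 0 * X 1 * X 2 * X 3 + X 4 * (X 0 ^ 3 + X 4 ^ 3)

section CriticalPoint

variable {K : Type*} [Field K] [CharZero K]

theorem pow_four_eq_of_critical {a e y q : K} (hyq : y * q + 3 * a ^ 2 * e = 0)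
    (hy : 4 * y ^ 3 + a * q = 0) (he : a ^ 3 + 4 * e ^ 3 = 0) : y ^ 4 = -3 * e ^ 4 := by
  linear_combination (y / 4) * hy - (a / 4) * hyq + (3 * e / 4) * he

theorem eq_zero_of_quartic_critical {a b c d e : K} (h0 : b * c * d + 3 * a ^ 2 * e = 0)
    (h1 : 4 * b ^ 3 + a * c * d = 0) (h2 : 4 * c ^ 3 + a * b * d = 0)
    (h3 : 4 * d ^ 3 + a * b * c = 0) (h4 : a ^ 3 + 4 * e ^ 3 = 0) :
    a = 0 ∧ b = 0 ∧ c = 0 ∧ d = 0 ∧ e = 0 := by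
  have hb : b ^ 4 = -3 * e ^ 4 :=
    pow_four_eq_of_critical (q := c * d) (by linear_combination h0) (by linear_combination h1) h4
  have hc : c ^ 4 = -3 * e ^ 4 :=
    pow_four_eq_of_critical (q := b * d) (by linear_combination h0) (by linear_combination h2) h4
  have hd : d ^ 4 = -3 * e ^ 4 :=
    pow_four_eq_of_critical (q := b * c) (by linear_combination h0) (by linear_combination h3) h4
  have he : e = 0 := by
    by_contra he
    have h8 : 3 * a ^ 8 = -e ^ 8 := by
      have h : e ^ 4 * (81 * a ^ 8 + 27 * e ^ 8) = 0 := by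
        linear_combination (-(b * c * d) ^ 3 + 3 * a ^ 2 * e * (b * c * d) ^ 2
          - 9 * a ^ 4 * e ^ 2 * (b * c * d) + 27 * a ^ 6 * e ^ 3) * h0
          + (c ^ 4 * d ^ 4) * hb - 3 * e ^ 4 * d ^ 4 * hc + 9 * e ^ 8 * hd
      linear_combination ((mul_eq_zero.mp h).resolve_left (pow_ne_zero 4 he)) / 27
    have h24 : (27 * 4 ^ 8 + 1 : K) * e ^ 24 = 0 := by
      linear_combination (9 * a ^ 16 - 3 * a ^ 8 * e ^ 8 + e ^ 16) * h8
        - 27 * (a ^ 21 - 4 * a ^ 18 * e ^ 3 + 16 * a ^ 15 * e ^ 6 - 64 * a ^ 12 * e ^ 9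
          + 256 * a ^ 9 * e ^ 12 - 1024 * a ^ 6 * e ^ 15 + 4096 * a ^ 3 * e ^ 18
          - 16384 * e ^ 21) * h4
    exact he <| pow_eq_zero_iff (by norm_num) |>.mp <|
      (mul_eq_zero.mp h24).resolve_left (by norm_num)
  subst he
  refine ⟨pow_eq_zero_iff (n := 3) (by norm_num) |>.mp (by linear_combination h4),
    pow_eq_zero_iff (n := 4) (by norm_num) |>.mp (by linear_combination hb),
    pow_eq_zero_iff (n := 4) (by norm_num) |>.mp (by linear_combination hc),
    pow_eq_zero_iff (n := 4) (by norm_num) |>.mp (by linear_combination hd), rfl⟩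

end CriticalPoint

theorem eval_pderiv_quarticX (x : Fin 5 → ℂ) :
    (fun i => eval x (pderiv i quarticX)) =
      ![x 1 * x 2 * x 3 + 3 * x 0 ^ 2 * x 4, 4 * x 1 ^ 3 + x 0 * x 2 * x 3,
        4 * x 2 ^ 3 + x 0 * x 1 * x 3, 4 * x 3 ^ 3 + x 0 * x 1 * x 2, x 0 ^ 3 + 4 * x 4 ^ 3] := by
  funext i
  fin_cases i <;> simp [quarticX] <;> ring

/-- The quartic hypersurface `X = {x₁⁴+x₂⁴+x₃⁴+x₀x₁x₂x₃+x₄(x₀³+x₄³)=0} ⊂ ℙ⁴` is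
nonsingular: there is no nonzero point at which the defining polynomial and all of
its partial derivatives simultaneously vanish. -/
theorem stmt0 :
    ¬ ∃ x : Fin 5 → ℂ, x ≠ 0 ∧ eval x quarticX = 0 ∧
      ∀ i : Fin 5, eval x (pderiv i quarticX) = 0 := by
  rintro ⟨x, hx, -, hd⟩
  have hgrad := (eval_pderiv_quarticX x).symm.trans (funext hd)
  obtain ⟨h0, h1, h2, h3, h4⟩ :=
    eq_zero_of_quartic_critical (congrFun hgrad 0) (congrFun hgrad 1) (congrFun hgrad 2)
      (congrFun hgrad 3) (congrFun hgrad 4)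
  exact hx (funext fun i => by fin_cases i <;> assumption)
end

section
/- For the quartic surface D = {x₀²x₃² + x₀x₁³ + x₃x₂³ + x₀x₁x₂x₃ = 0} ⊂ ℙ³, the singular locus is exactly the two points p = (1:0:0:0) and p' = (0:0:0:1), and at each of these points the local equation has multiplicity 2 with degenerate (rank 1) quadratic part. -/
open MvPolynomial

/-- The quartic surface `D = {x₀²x₃² + x₀x₁³ + x₃x₂³ + x₀x₁x₂x₃ = 0} ⊂ ℙ³`. -/
noncomputable def quarticD15 : MvPolynomial (Fin 4) ℂ :=
  X 0 ^ 2 * X 3 ^ 2 + X 0 * X 1 ^ 3 + X 3 * X 2 ^ 3 + X 0 * X 1 * X 2 * X 3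

/-- Local equation of `D` at `p = (1:0:0:0)` in the chart `x₀ = 1`, with affine
coordinates `(x₁, x₂, x₃) = (X 0, X 1, X 2)`:  `x₃² + x₁³ + x₃x₂³ + x₁x₂x₃`.
By the symmetry `x₀ ↔ x₃, x₁ ↔ x₂`, the local equation at `p' = (0:0:0:1)` is the
same polynomial in the coordinates `(x₂, x₁, x₀)`. -/
noncomputable def localEqD15 : MvPolynomial (Fin 3) ℂ :=
  X 2 ^ 2 + X 0 ^ 3 + X 2 * X 1 ^ 3 + X 0 * X 1 * X 2

/-!
At a singular point all partials of `F` vanish, and `∂₁F = x₀(3x₁² + x₂x₃)`,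
`∂₂F = x₃(3x₂² + x₀x₁)`. If `x₀x₃ = 0`, then `∂₀F` or `∂₃F` reduces to a pure cube and forces
`x₁ = x₂ = 0`. If `x₀x₃ ≠ 0`, the four equations give `x₀x₃² = x₁³`, `x₀²x₃ = x₂³` and
`x₀x₃ = 9x₁x₂`, so `x₁x₂ ≠ 0` and yet `728 (x₁x₂)³ = 0`.

The local equation is `x₃²` plus a polynomial in `𝔪³`, so its initial form is `x₃²`.
-/

namespace MvPolynomial

variable {σ R : Type*}

section CommSemiring

variable [CommSemiring R] {p q : MvPolynomial σ R} {k : ℕ}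

theorem X_mul_X_mul_X_mem_pow_three_idealOfVars (i j k : σ) :
    X i * X j * X k ∈ idealOfVars σ R ^ 3 := by
  have hX : ∀ l, (X l : MvPolynomial σ R) ∈ idealOfVars σ R := fun l ↦ Ideal.subset_span ⟨l, rfl⟩
  rw [pow_succ, sq]
  exact Ideal.mul_mem_mul (Ideal.mul_mem_mul (hX i) (hX j)) (hX k)

theorem IsHomogeneous.degree_eq_of_mem_support (hq : q.IsHomogeneous k) {d : σ →₀ ℕ}
    (hd : d ∈ q.support) : d.degree = k := by
  rw [Finsupp.degree_eq_weight_one]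
  exact hq (mem_support_iff.mp hd)

theorem IsHomogeneous.mem_pow_idealOfVars (hq : q.IsHomogeneous k) : q ∈ idealOfVars σ R ^ k :=
  (mem_pow_idealOfVars_iff k q).mpr fun _ hd ↦ (hq.degree_eq_of_mem_support hd).ge

theorem IsHomogeneous.notMem_pow_succ_idealOfVars (hq : q.IsHomogeneous k) (hq0 : q ≠ 0) :
    q ∉ idealOfVars σ R ^ (k + 1) := by
  obtain ⟨d, hd⟩ := support_nonempty.mpr hq0
  rw [mem_pow_idealOfVars_iff]
  intro h
  have := h d hd
  rw [hq.degree_eq_of_mem_support hd] at this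
  omega

theorem homogeneousComponent_eq_zero_of_mem_pow_idealOfVars {n : ℕ}
    (hp : p ∈ idealOfVars σ R ^ n) (hk : k < n) : homogeneousComponent k p = 0 :=
  homogeneousComponent_eq_zero' _ _ fun d hd ↦
    (hk.trans_le ((mem_pow_idealOfVars_iff n p).mp hp d hd)).ne'

end CommSemiring

section CommRing

variable [CommRing R] {p q : MvPolynomial σ R} {k : ℕ}

/-! If `p - q ∈ 𝔪 ^ (k + 1)` for a form `q` of degree `k`, then `q` is the initial form of `p`. -/

theorem mem_pow_idealOfVars_of_sub_mem (hq : q.IsHomogeneous k)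
    (hpq : p - q ∈ idealOfVars σ R ^ (k + 1)) : p ∈ idealOfVars σ R ^ k := by
  simpa using add_mem hq.mem_pow_idealOfVars (Ideal.pow_le_pow_right k.le_succ hpq)

theorem notMem_pow_succ_idealOfVars_of_sub_mem (hq : q.IsHomogeneous k) (hq0 : q ≠ 0)
    (hpq : p - q ∈ idealOfVars σ R ^ (k + 1)) : p ∉ idealOfVars σ R ^ (k + 1) :=
  fun hp ↦ hq.notMem_pow_succ_idealOfVars hq0 (by simpa using sub_mem hp hpq)

theorem homogeneousComponent_eq_of_sub_mem (hq : q.IsHomogeneous k)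
    (hpq : p - q ∈ idealOfVars σ R ^ (k + 1)) : homogeneousComponent k p = q := by
  have := homogeneousComponent_eq_zero_of_mem_pow_idealOfVars hpq k.lt_succ_self
  rwa [map_sub, homogeneousComponent_eq_self hq, sub_eq_zero] at this

end CommRing

theorem span_X_fin_three [CommSemiring R] :
    (Ideal.span {X 0, X 1, X 2} : Ideal (MvPolynomial (Fin 3) R)) = idealOfVars (Fin 3) R := by
  rw [idealOfVars]
  congr
  ext p
  simp [Fin.exists_fin_succ, eq_comm]

end MvPolynomial

theorem eq_zero_of_quarticD15_critical {K : Type*} [Field K] [CharZero K] {a b c d : K}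
    (h0 : 2 * a * d ^ 2 + b ^ 3 + b * c * d = 0) (h1 : a * (3 * b ^ 2 + c * d) = 0)
    (h2 : d * (3 * c ^ 2 + a * b) = 0) (h3 : 2 * a ^ 2 * d + c ^ 3 + a * b * c = 0) :
    b = 0 ∧ c = 0 ∧ (a = 0 ∨ d = 0) := by
  by_cases had : a = 0 ∨ d = 0
  · rcases had with rfl | rfl
    · have hc : c = 0 := pow_eq_zero_iff three_ne_zero |>.mp (by simpa using h3)
      subst hc
      exact ⟨pow_eq_zero_iff three_ne_zero |>.mp (by simpa using h0), rfl, .inl rfl⟩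
    · have hb : b = 0 := pow_eq_zero_iff three_ne_zero |>.mp (by simpa using h0)
      subst hb
      exact ⟨rfl, pow_eq_zero_iff three_ne_zero |>.mp (by simpa using h3), .inr rfl⟩
  exfalso
  push Not at had
  obtain ⟨ha, hd⟩ := had
  have e1 : c * d = -3 * b ^ 2 := by
    linear_combination (mul_eq_zero.mp h1).resolve_left ha
  have e2 : a * b = -3 * c ^ 2 := by
    linear_combination (mul_eq_zero.mp h2).resolve_left hd
  have e3 : a * d ^ 2 = b ^ 3 := by
    have : (2 : K) * (a * d ^ 2 - b ^ 3) = 0 := by linear_combination h0 - b * e1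
    linear_combination (mul_eq_zero.mp this).resolve_left two_ne_zero
  have e4 : a ^ 2 * d = c ^ 3 := by
    have : (2 : K) * (a ^ 2 * d - c ^ 3) = 0 := by linear_combination h3 - c * e2
    linear_combination (mul_eq_zero.mp this).resolve_left two_ne_zero
  have hbc : b * c ≠ 0 := mul_ne_zero (by rintro rfl; simp_all) (by rintro rfl; simp_all)
  have e5 : a * d = 9 * (b * c) :=
    mul_left_cancel₀ hbc (by linear_combination a * b * e1 - 3 * b ^ 2 * e2)
  have : (728 : K) * (b * c) ^ 3 = 0 := by
    linear_combination (a ^ 2 * d) * e3 + b ^ 3 * e4 -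
      (a ^ 2 * d ^ 2 + 9 * a * d * (b * c) + 81 * (b * c) ^ 2) * e5
  simp_all

theorem eval_pderiv_quarticD15_eq_zero_iff (x : Fin 4 → ℂ) :
    (∀ i, eval x (pderiv i quarticD15) = 0) ↔
      2 * x 0 * x 3 ^ 2 + x 1 ^ 3 + x 1 * x 2 * x 3 = 0 ∧ x 0 * (3 * x 1 ^ 2 + x 2 * x 3) = 0 ∧
      x 3 * (3 * x 2 ^ 2 + x 0 * x 1) = 0 ∧ 2 * x 0 ^ 2 * x 3 + x 2 ^ 3 + x 0 * x 1 * x 2 = 0 := by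
  simp only [Fin.forall_fin_succ, IsEmpty.forall_iff, and_true]
  simp only [quarticD15, map_add, map_mul, map_pow, Derivation.leibniz, Derivation.leibniz_pow,
    pderiv_X, Pi.single_apply, smul_eq_mul, nsmul_eq_mul, eval_X, map_ofNat, Nat.cast_ofNat, map_one, map_zero,
    Fin.isValue, Fin.reduceSucc, Fin.succ_zero_eq_one, Fin.succ_one_eq_two, Fin.reduceEq,
    if_true, if_false]
  ring_nf

theorem singularLocus_quarticD15 (x : Fin 4 → ℂ) (hx : x ≠ 0) :
    (eval x quarticD15 = 0 ∧ ∀ i : Fin 4, eval x (pderiv i quarticD15) = 0) ↔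
      ∃ t : ℂ, t ≠ 0 ∧
        (x = (fun i => if i = 0 then t else 0) ∨ x = (fun i => if i = 3 then t else 0)) := by
  constructor
  · rintro ⟨-, hcrit⟩
    obtain ⟨h0, h1, h2, h3⟩ := (eval_pderiv_quarticD15_eq_zero_iff x).mp hcrit
    obtain ⟨hb, hc, ha | hd⟩ := eq_zero_of_quarticD15_critical h0 h1 h2 h3
    · refine ⟨x 3, fun h ↦ hx ?_, .inr ?_⟩ <;> funext i <;> fin_cases i <;> simp [*]
    · refine ⟨x 0, fun h ↦ hx ?_, .inl ?_⟩ <;> funext i <;> fin_cases i <;> simp [*]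
  · rintro ⟨t, -, rfl | rfl⟩ <;>
      exact ⟨by simp [quarticD15], (eval_pderiv_quarticD15_eq_zero_iff _).mpr (by simp)⟩

theorem localEqD15_sub_X_two_sq_mem : localEqD15 - X 2 ^ 2 ∈ idealOfVars (Fin 3) ℂ ^ 3 := by
  rw [show localEqD15 - X 2 ^ 2 = X 0 * X 0 * X 0 + X 2 * X 1 * X 1 * X 1 + X 0 * X 1 * X 2 by
    rw [localEqD15]; ring]
  refine add_mem (add_mem ?_ (Ideal.mul_mem_right _ _ ?_)) ?_ <;>
    exact X_mul_X_mul_X_mem_pow_three_idealOfVars _ _ _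

/-- For `D = {x₀²x₃²+x₀x₁³+x₃x₂³+x₀x₁x₂x₃=0} ⊂ ℙ³`: the singular locus is exactly the
two points `p = (1:0:0:0)` and `p' = (0:0:0:1)`, and at each of them (by the symmetry
`x₀ ↔ x₃, x₁ ↔ x₂` the two local equations coincide) the local equation has
multiplicity 2 with degenerate quadratic part of rank 1 (the square of a nonzero
linear form). -/
theorem stmt15 :
    (∀ x : Fin 4 → ℂ, x ≠ 0 →
      ((eval x quarticD15 = 0 ∧ ∀ i : Fin 4, eval x (pderiv i quarticD15) = 0) ↔
        ∃ t : ℂ, t ≠ 0 ∧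
          (x = (fun i => if i = 0 then t else 0) ∨
           x = (fun i => if i = 3 then t else 0)))) ∧
    localEqD15 ∈
      (Ideal.span {X 0, X 1, X 2} : Ideal (MvPolynomial (Fin 3) ℂ)) ^ 2 ∧
    localEqD15 ∉
      (Ideal.span {X 0, X 1, X 2} : Ideal (MvPolynomial (Fin 3) ℂ)) ^ 3 ∧
    ∃ ℓ : MvPolynomial (Fin 3) ℂ, ℓ.IsHomogeneous 1 ∧ ℓ ≠ 0 ∧
      homogeneousComponent 2 localEqD15 = ℓ ^ 2 := by
  have hsq : (X 2 ^ 2 : MvPolynomial (Fin 3) ℂ).IsHomogeneous 2 := (isHomogeneous_X ℂ 2).pow 2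
  rw [span_X_fin_three]
  exact ⟨singularLocus_quarticD15, mem_pow_idealOfVars_of_sub_mem hsq localEqD15_sub_X_two_sq_mem,
    notMem_pow_succ_idealOfVars_of_sub_mem hsq (pow_ne_zero 2 (X_ne_zero 2))
      localEqD15_sub_X_two_sq_mem,
    X 2, isHomogeneous_X ℂ 2, X_ne_zero 2,
    homogeneousComponent_eq_of_sub_mem hsq localEqD15_sub_X_two_sq_mem⟩
end
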